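/- arXiv:1012.4124 — 4 statements merged into one kernel-verified Lean document; each statement's English description precedes it below -/
import Mathlib

section
/- Let ω ∈ ℝᴺ be such that (1, ω¹, ..., ωᴺ) are linearly independent over ℚ (equivalently, z·ω ∈ ℤ with z ∈ ℤᴺ implies z = 0). Then for every x, y ∈ 𝕋ᴺ and every δ > 0 there exists k ∈ ℕ with d(x + kω, y) < δ, where d is the metric on the torus 𝕋ᴺ = ℝᴺ/ℤᴺ. -/
/-!
Weyl's equidistribution argument. For `z ∈ ℤᴺ` the character `χ_z(x) = e(z · x)` satisfies
`χ_z(x + kω) = χ_z(x) χ_z(ω)ᵏ`, so its Birkhoff averages along the orbit of `x` are Cesàro means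
of a geometric sequence; for `z ≠ 0` the ratio `χ_z(ω)` is a unit complex number different from
`1`, hence these means tend to `0 = ∫ χ_z`. The characters span a dense subspace of `C(𝕋ᴺ, ℂ)`
(Stone–Weierstrass) and the averaging functionals are `1`-Lipschitz, so the averages of every
continuous function converge to its integral. A bump function at `y` has positive integral, so it
cannot vanish along the whole orbit.
-/

open MeasureTheory Filter Topology Finset
open scoped Real

section BirkhoffAverage

variable {α E : Type*} (𝕜 : Type*) [RCLike 𝕜] [NormedAddCommGroup E] [NormedSpace 𝕜 E]

theorem norm_birkhoffAverage_le (f : α → α) {g : α → E} {C : ℝ} (hC : ∀ y, ‖g y‖ ≤ C)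
    (n : ℕ) (x : α) : ‖birkhoffAverage 𝕜 f g n x‖ ≤ C := by
  rcases eq_or_ne n 0 with rfl | hn
  · simpa using (norm_nonneg _).trans (hC x)
  calc ‖birkhoffAverage 𝕜 f g n x‖
      ≤ (n : ℝ)⁻¹ * ∑ k ∈ range n, ‖g (f^[k] x)‖ := by
        rw [birkhoffAverage, birkhoffSum, norm_smul, norm_inv, RCLike.norm_natCast]
        gcongr
        exact norm_sum_le _ _
    _ ≤ (n : ℝ)⁻¹ * (n * C) := by
        gcongr
        simpa using sum_le_sum fun k (_ : k ∈ range n) => hC (f^[k] x)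
    _ = C := by field_simp

theorem birkhoffAverage_smul (f : α → α) (g : α → E) (c : 𝕜) :
    birkhoffAverage 𝕜 f (c • g) = c • birkhoffAverage 𝕜 f g := by
  funext n x
  simp only [birkhoffAverage, birkhoffSum, Pi.smul_apply, ← smul_sum, smul_comm c]

end BirkhoffAverage

section Equidistribution

variable {X : Type*} [TopologicalSpace X] [CompactSpace X] [MeasurableSpace X]
  [OpensMeasurableSpace X] (μ : Measure X) [IsFiniteMeasure μ]

theorem ContinuousMap.integrable_of_compactSpace {E : Type*} [NormedAddCommGroup E]
    (g : C(X, E)) : Integrable g μ :=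
  g.continuous.integrable_of_hasCompactSupport (.of_compactSpace _)

theorem lipschitzWith_integral_continuousMap {E : Type*} [NormedAddCommGroup E]
    [NormedSpace ℝ E] :
    LipschitzWith ⟨μ.real Set.univ, measureReal_nonneg⟩ fun g : C(X, E) => ∫ y, g y ∂μ := by
  refine LipschitzWith.of_dist_le_mul fun g g' => ?_
  rw [dist_eq_norm, ← integral_sub (g.integrable_of_compactSpace μ)
    (g'.integrable_of_compactSpace μ), dist_eq_norm, mul_comm]
  exact norm_integral_le_of_norm_le_const (.of_forall fun y => (g - g').norm_coe_le_norm y)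

variable {μ} in
theorem tendsto_birkhoffAverage_integral_of_span_dense {s : Set C(X, ℂ)}
    (hs : (Submodule.span ℂ s).topologicalClosure = ⊤) (T : X → X) (x : X)
    (h : ∀ g ∈ s, Tendsto (birkhoffAverage ℂ T g · x) atTop (𝓝 (∫ y, g y ∂μ)))
    (g : C(X, ℂ)) : Tendsto (birkhoffAverage ℂ T g · x) atTop (𝓝 (∫ y, g y ∂μ)) := by
  let good : Submodule ℂ C(X, ℂ) :=
    { carrier := {g | Tendsto (birkhoffAverage ℂ T g · x) atTop (𝓝 (∫ y, g y ∂μ))}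
      zero_mem' := by simp [birkhoffAverage, birkhoffSum]
      add_mem' := fun {g g'} hg hg' => by
        simpa [birkhoffAverage_add, integral_add (g.integrable_of_compactSpace μ)
          (g'.integrable_of_compactSpace μ)] using hg.add hg'
      smul_mem' := fun c g hg => by
        simpa [birkhoffAverage_smul, integral_const_mul] using hg.const_smul c }
  have hclosed : IsClosed (good : Set C(X, ℂ)) := by
    refine Equicontinuous.isClosed_setOfPred_tendsto ?_
      (lipschitzWith_integral_continuousMap μ).continuous
    refine (LipschitzWith.uniformEquicontinuous _ 1 fun n => LipschitzWith.of_dist_le_mul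
      fun g g' => ?_).equicontinuous
    simpa only [dist_eq_norm, ContinuousMap.coe_sub, birkhoffAverage_sub, Pi.sub_apply,
      NNReal.coe_one, one_mul] using norm_birkhoffAverage_le ℂ T (g - g').norm_coe_le_norm n x
  have : good = ⊤ := eq_top_iff.2 <| hs ▸ (Submodule.span ℂ s).topologicalClosure_minimal
    (Submodule.span_le.2 h) hclosed
  exact (this ▸ Submodule.mem_top : g ∈ good)

end Equidistribution

theorem exists_dist_iterate_lt_of_tendsto_birkhoffAverage {X : Type*} [MetricSpace X]
    [CompactSpace X] [MeasurableSpace X] [OpensMeasurableSpace X] {μ : Measure X}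
    [IsFiniteMeasure μ] [μ.IsOpenPosMeasure] {T : X → X} {x : X}
    (h : ∀ g : C(X, ℂ), Tendsto (birkhoffAverage ℂ T g · x) atTop (𝓝 (∫ y, g y ∂μ)))
    (y : X) {δ : ℝ} (hδ : 0 < δ) : ∃ k, dist (T^[k] x) y < δ := by
  by_contra! hfar
  let bump : X → ℝ := fun w => max 0 (δ - dist w y)
  have hbump : Continuous bump := by fun_prop
  have hint : 0 < ∫ w, bump w ∂μ :=
    hbump.integral_pos_of_hasCompactSupport_nonneg_nonzero (x := y) (.of_compactSpace _)
      (fun w => le_max_left _ _) (by simpa [bump] using hδ)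
  have hzero : ∀ n, birkhoffAverage ℂ T (fun w => (bump w : ℂ)) n x = 0 := fun n => by
    simp [birkhoffAverage, birkhoffSum, bump, hfar]
  have := tendsto_nhds_unique (h ⟨fun w => (bump w : ℂ), by fun_prop⟩)
    (tendsto_const_nhds.congr fun n => (hzero n).symm)
  rw [ContinuousMap.coe_mk, integral_complex_ofReal, Complex.ofReal_eq_zero] at this
  exact hint.ne' this

namespace AddChar

variable {G : Type*} [AddCommGroup G] (ψ : AddChar G ℂ) {a : G}

theorem integral_eq_zero_of_ne_one [MeasurableSpace G] [MeasurableAdd G] (μ : Measure G)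
    [μ.IsAddRightInvariant] (ha : ψ a ≠ 1) : ∫ y, ψ y ∂μ = 0 := by
  have h : (∫ y, ψ y ∂μ) * ψ a = ∫ y, ψ y ∂μ := by
    simpa only [map_add_eq_mul, integral_mul_const] using integral_add_right_eq_self (μ := μ) ψ a
  by_contra hI
  exact ha ((mul_eq_left₀ hI).1 h)

theorem birkhoffSum_add_right (x : G) (n : ℕ) :
    birkhoffSum (· + a) ψ n x = ψ x * ∑ k ∈ range n, ψ a ^ k := by
  simp only [birkhoffSum, add_right_iterate_apply, map_add_eq_mul, map_nsmul_eq_pow, mul_sum]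

theorem tendsto_birkhoffAverage_add_right (ha : ψ a ≠ 1) (ha' : ‖ψ a‖ ≤ 1) (x : G) :
    Tendsto (birkhoffAverage ℂ (· + a) ψ · x) atTop (𝓝 0) := by
  refine squeeze_zero_norm (fun n => ?_) <|
    (tendsto_const_nhds (x := ‖ψ x‖ * (2 / ‖ψ a - 1‖))).div_atTop tendsto_natCast_atTop_atTop
  rw [birkhoffAverage, birkhoffSum_add_right, geom_sum_eq ha, norm_smul, norm_inv,
    Complex.norm_natCast, norm_mul, norm_div, inv_mul_eq_div]
  have : ‖ψ a ^ n - 1‖ ≤ 2 := by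
    calc ‖ψ a ^ n - 1‖ ≤ ‖ψ a‖ ^ n + ‖(1 : ℂ)‖ := by
          simpa only [norm_pow] using norm_sub_le (ψ a ^ n) 1
      _ ≤ 1 + 1 := by gcongr; exacts [pow_le_one₀ (norm_nonneg _) ha', norm_one.le]
      _ = 2 := by norm_num
  gcongr

end AddChar

namespace UnitAddTorus

variable {d : Type*} [Fintype d]

theorem measureReal_univ : (volume : Measure (UnitAddTorus d)).real Set.univ = 1 := by
  simp [Measure.real, volume_pi, Measure.pi_univ]

theorem mFourier_coe_apply (n : d → ℤ) (a : d → ℝ) :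
    mFourier n (fun i => (a i : UnitAddCircle)) =
      Complex.exp (2 * π * Complex.I * ↑(∑ i, n i * a i)) := by
  simp only [mFourier, ContinuousMap.coe_mk, fourier_coe_apply, ← Complex.exp_sum]
  push_cast
  rw [mul_sum]
  congr 1
  refine sum_congr rfl fun i _ => ?_
  ring

theorem mFourier_coe_eq_one_iff (n : d → ℤ) (a : d → ℝ) :
    mFourier n (fun i => (a i : UnitAddCircle)) = 1 ↔ ∃ m : ℤ, ∑ i, n i * a i = m := by
  rw [mFourier_coe_apply, Complex.exp_eq_one_iff]
  refine exists_congr fun m => ?_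
  have : 2 * π * Complex.I ≠ 0 := by simp [Real.pi_ne_zero]
  rw [mul_comm _ (2 * π * Complex.I), mul_right_inj' this]
  exact_mod_cast Iff.rfl

theorem norm_mFourier_apply (n : d → ℤ) (x : UnitAddTorus d) : ‖mFourier n x‖ = 1 := by
  simp [mFourier, fourier_apply, norm_prod, Circle.norm_coe]

noncomputable def mFourierChar (n : d → ℤ) : AddChar (UnitAddTorus d) ℂ where
  toFun := mFourier n
  map_zero_eq_one' := by simp [mFourier]
  map_add_eq_mul' x y := by
    simp only [mFourier, ContinuousMap.coe_mk, Pi.add_apply, fourier_apply, smul_add,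
      AddCircle.toCircle_add, Circle.coe_mul, prod_mul_distrib]

theorem coe_mFourierChar (n : d → ℤ) : ⇑(mFourierChar n) = mFourier n := rfl

theorem tendsto_birkhoffAverage_add_right {a : UnitAddTorus d} (ha : ∀ n ≠ 0, mFourier n a ≠ 1)
    (x : UnitAddTorus d) (g : C(UnitAddTorus d, ℂ)) :
    Tendsto (birkhoffAverage ℂ (· + a) g · x) atTop (𝓝 (∫ y, g y)) := by
  refine tendsto_birkhoffAverage_integral_of_span_dense span_mFourier_closure_eq_top _ x ?_ g
  rintro _ ⟨n, rfl⟩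
  by_cases hn : n = 0
  · subst hn
    have h1 : ∫ y, (1 : C(UnitAddTorus d, ℂ)) y = 1 := by simp [measureReal_univ]
    rw [mFourier_zero, h1]
    exact tendsto_const_nhds.congr' <| (eventually_ne_atTop 0).mono fun k hk =>
      (congrFun (birkhoffAverage_of_comp_eq ℂ rfl (Nat.cast_ne_zero.2 hk)) x).symm
  · rw [← coe_mFourierChar, (mFourierChar n).integral_eq_zero_of_ne_one volume (ha n hn)]
    exact (mFourierChar n).tendsto_birkhoffAverage_add_right (ha n hn)
      (norm_mFourier_apply n a).le x

end UnitAddTorus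

/-- Minimality of irrational rotations: if `z · ω ∈ ℤ` for `z ∈ ℤᴺ` forces `z = 0`,
then every orbit of the translation by `ω` on the torus `𝕋ᴺ` is `δ`-dense. -/
theorem stmt_1 (N : ℕ) (ω : Fin N → ℝ)
    (hω : ∀ z : Fin N → ℤ, (∃ m : ℤ, (∑ n, (z n : ℝ) * ω n) = (m : ℝ)) → z = 0) :
    ∀ x y : Fin N → AddCircle (1 : ℝ), ∀ δ > (0 : ℝ),
      ∃ k : ℕ, dist (fun n => x n + ((k : ℝ) * ω n : ℝ)) y < δ := by
  intro x y δ hδ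
  let a : UnitAddTorus (Fin N) := fun n => (ω n : UnitAddCircle)
  have ha : ∀ z ≠ 0, UnitAddTorus.mFourier z a ≠ 1 := fun z hz h =>
    hz (hω z ((UnitAddTorus.mFourier_coe_eq_one_iff z ω).1 h))
  obtain ⟨k, hk⟩ := exists_dist_iterate_lt_of_tendsto_birkhoffAverage
    (UnitAddTorus.tendsto_birkhoffAverage_add_right ha x) y hδ
  refine ⟨k, ?_⟩
  convert hk using 2
  funext n
  simp [a, add_right_iterate_apply, ← nsmul_eq_mul]
end

section
/- Suppose Γ¹ = I and Γⁿ (2 ≤ n ≤ N) are invertible diagonal d×d real matrices, and let Y_α(t) = (y¹_α(t),...,y^N_α(t)) solve the coupled system dyⁿ/dt = Γⁿ b(y¹,...,y^N, α(t)) with initial data (y¹,...,y^N). Then for all t ≥ 0 and all n, yⁿ_α(t) = yⁿ + Γⁿ (y¹_α(t) − y¹); i.e., the evolution of all components is slaved to the first component. -/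
open Set Matrix

theorem eq_add_apply_sub_of_hasDerivAt_apply {E F : Type*} [NormedAddCommGroup E]
    [NormedSpace ℝ E] [NormedAddCommGroup F] [NormedSpace ℝ F] (L : E →L[ℝ] F)
    {f : ℝ → F} {g g' : ℝ → E} {a b : ℝ} (hab : a ≤ b)
    (hf : ∀ s ∈ Icc a b, HasDerivAt f (L (g' s)) s)
    (hg : ∀ s ∈ Icc a b, HasDerivAt g (g' s) s) :
    f b = f a + L (g b - g a) := by
  have hLg : ∀ s ∈ Icc a b, HasDerivAt (fun s => f a + L (g s - g a)) (L (g' s)) s :=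
    fun s hs => (L.hasFDerivAt.comp_hasDerivAt s ((hg s hs).sub_const (g a))).const_add (f a)
  refine eq_of_has_deriv_right_eq (fun s hs => (hf s (Ico_subset_Icc_self hs)).hasDerivWithinAt)
    (fun s hs => (hLg s (Ico_subset_Icc_self hs)).hasDerivWithinAt)
    (fun s hs => (hf s hs).continuousAt.continuousWithinAt)
    (fun s hs => (hLg s hs).continuousAt.continuousWithinAt) (by simp) b ⟨hab, le_rfl⟩

theorem toEuclideanCLM_diagonal_apply {ι : Type*} [Fintype ι] [DecidableEq ι] (c : ι → ℝ)
    (v : EuclideanSpace ℝ ι) :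
    toEuclideanCLM (𝕜 := ℝ) (diagonal c) v = (WithLp.equiv 2 (ι → ℝ)).symm fun i => c i * v i := by
  ext i
  simp [ofLp_toEuclideanCLM, mulVec_diagonal]

theorem stmt_11_general (d N : ℕ) [NeZero N] (A : Type*)
    (γ : Fin N → Fin d → ℝ) (hγ1 : ∀ i, γ 0 i = 1)
    (b : (Fin N → EuclideanSpace ℝ (Fin d)) → A → EuclideanSpace ℝ (Fin d))
    (α : ℝ → A) (y : Fin N → ℝ → EuclideanSpace ℝ (Fin d))
    (hode : ∀ (n : Fin N) (t : ℝ), 0 ≤ t →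
      HasDerivAt (y n)
        ((WithLp.equiv 2 (Fin d → ℝ)).symm fun i =>
          γ n i * b (fun m => y m t) (α t) i) t) :
    ∀ t : ℝ, 0 ≤ t → ∀ n : Fin N,
      y n t = y n 0 + (WithLp.equiv 2 (Fin d → ℝ)).symm
        (fun i => γ n i * (y 0 t - y 0 0) i) := by
  intro t ht n
  set B : ℝ → EuclideanSpace ℝ (Fin d) := fun s => b (fun m => y m s) (α s)
  have hy0 : ∀ s ∈ Icc 0 t, HasDerivAt (y 0) (B s) s := fun s hs => by
    simpa [hγ1] using hode 0 s hs.1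
  have hyn : ∀ s ∈ Icc 0 t,
      HasDerivAt (y n) (toEuclideanCLM (𝕜 := ℝ) (diagonal (γ n)) (B s)) s :=
    fun s hs => by simpa only [toEuclideanCLM_diagonal_apply] using hode n s hs.1
  simpa only [toEuclideanCLM_diagonal_apply] using
    eq_add_apply_sub_of_hasDerivAt_apply _ ht hyn hy0

/-- For the coupled system `dyⁿ/dt = Γⁿ b(y¹,...,yᴺ, α(t))` with `Γ¹ = I` and the
`Γⁿ` diagonal invertible, all components are slaved to the first:
`yⁿ(t) = yⁿ(0) + Γⁿ (y¹(t) − y¹(0))` for all `t ≥ 0`. -/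
theorem stmt_11 (d N : ℕ) [NeZero N] (A : Type*)
    (γ : Fin N → Fin d → ℝ) (hγ1 : ∀ i, γ 0 i = 1) (hγ : ∀ n i, γ n i ≠ 0)
    (b : (Fin N → EuclideanSpace ℝ (Fin d)) → A → EuclideanSpace ℝ (Fin d))
    (α : ℝ → A) (y : Fin N → ℝ → EuclideanSpace ℝ (Fin d))
    (hode : ∀ (n : Fin N) (t : ℝ), 0 ≤ t →
      HasDerivAt (y n)
        ((WithLp.equiv 2 (Fin d → ℝ)).symm fun i =>
          γ n i * b (fun m => y m t) (α t) i) t) :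
    ∀ t : ℝ, 0 ≤ t → ∀ n : Fin N,
      y n t = y n 0 + (WithLp.equiv 2 (Fin d → ℝ)).symm
        (fun i => γ n i * (y 0 t - y 0 0) i) :=
  stmt_11_general d N A γ hγ1 b α y hode
end

section
/- Let u_λ : X → ℝ (λ > 0) be functions on a metric space X satisfying: (a) |λu_λ(y) − λu_λ(y')| ≤ C d(y,y') for all y, y', λ; (b) λ|u_λ| ≤ M uniformly; (c) for every y, y' ∈ X and δ > 0 there exists T = T(δ,y,y') > 0 independent of λ such that λu_λ(y) ≤ λT(C₀+M) + e^{−λT} λu_λ(ỹ) for some ỹ with d(ỹ, y') ≤ δ, where C₀ bounds the running cost. Then if X is compact, any uniform limit along λ' → 0 of λ'u_{λ'} is a constant function; more precisely, if λ'u_{λ'} → w uniformly then w(y) ≤ w(y') for all y, y', hence w is constant. -/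
/-- Abstract dynamic programming argument: on a compact metric space, if the
functions `λ u_λ` are equi-Lipschitz, uniformly bounded, and satisfy the
approximate controllability inequality with time `T` independent of `λ`, then any
uniform limit `w` of `λ' u_{λ'}` along `λ' → 0` is a constant function. -/
theorem stmt_13 (X : Type*) [MetricSpace X] [CompactSpace X]
    (u : ℝ → X → ℝ) (C M C₀ : ℝ)
    (ha : ∀ lam : ℝ, 0 < lam → ∀ y y' : X,
      |lam * u lam y - lam * u lam y'| ≤ C * dist y y')
    (hb : ∀ lam : ℝ, 0 < lam → ∀ y : X, lam * |u lam y| ≤ M)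
    (hc : ∀ y y' : X, ∀ δ > (0 : ℝ), ∃ T > (0 : ℝ), ∀ lam : ℝ, 0 < lam →
      ∃ ytil : X, dist ytil y' ≤ δ ∧
        lam * u lam y ≤ lam * T * (C₀ + M) + Real.exp (-lam * T) * (lam * u lam ytil))
    (lam' : ℕ → ℝ) (hpos : ∀ n, 0 < lam' n)
    (hto0 : Filter.Tendsto lam' Filter.atTop (nhds 0))
    (w : X → ℝ)
    (hconv : TendstoUniformly (fun n y => lam' n * u (lam' n) y) w Filter.atTop) :
    (∀ y y' : X, w y ≤ w y') ∧ ∀ y y' : X, w y = w y' := by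
  have key : ∀ y y' : X, w y ≤ w y' := by
    intro y y'
    have hM : 0 ≤ M :=
      le_trans (mul_nonneg (hpos 0).le (abs_nonneg _)) (hb _ (hpos 0) y)
    have main : ∀ δ > (0:ℝ), w y ≤ w y' + |C| * δ := by
      intro δ hδ
      obtain ⟨T, hT, hc'⟩ := hc y y' δ hδ
      have hstep : ∀ n, lam' n * u (lam' n) y ≤
          lam' n * T * (C₀ + M) + lam' n * T * M +
            (lam' n * u (lam' n) y' + |C| * δ) := by
        intro n
        obtain ⟨yt, hd, hineq⟩ := hc' (lam' n) (hpos n)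
        set l := lam' n with hldef
        have hl := hpos n
        have hA : |l * u l yt| ≤ M := by
          rw [abs_mul, abs_of_pos hl]; exact hb l hl yt
        have hAy : |l * u l yt - l * u l y'| ≤ |C| * δ := by
          calc |l * u l yt - l * u l y'| ≤ C * dist yt y' := ha l hl yt y'
            _ ≤ |C| * dist yt y' :=
                mul_le_mul_of_nonneg_right (le_abs_self C) dist_nonneg
            _ ≤ |C| * δ := mul_le_mul_of_nonneg_left hd (abs_nonneg C)
        have hlT : 0 < l * T := mul_pos hl hT
        have he1 : Real.exp (-l * T) ≤ 1 := by
          apply Real.exp_le_one_iff.mpr; nlinarith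
        have he2 : 1 - Real.exp (-l * T) ≤ l * T := by
          nlinarith [Real.add_one_le_exp (-l * T)]
        have he0 : 0 < Real.exp (-l * T) := Real.exp_pos _
        obtain ⟨hA1, hA2⟩ := abs_le.mp hA
        obtain ⟨hAy1, hAy2⟩ := abs_le.mp hAy
        nlinarith [mul_nonneg (by linarith : (0:ℝ) ≤ 1 - Real.exp (-l * T))
            (by linarith : (0:ℝ) ≤ M + l * u l yt),
          mul_nonneg (by linarith : (0:ℝ) ≤ l * T - (1 - Real.exp (-l * T))) hM]
      have hlhs : Filter.Tendsto (fun n => lam' n * u (lam' n) y)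
          Filter.atTop (nhds (w y)) := hconv.tendsto_at y
      have hrhs : Filter.Tendsto
          (fun n => lam' n * T * (C₀ + M) + lam' n * T * M +
            (lam' n * u (lam' n) y' + |C| * δ)) Filter.atTop
          (nhds (0 * T * (C₀ + M) + 0 * T * M + (w y' + |C| * δ))) := by
        exact (((hto0.mul_const T).mul_const (C₀ + M)).add
          ((hto0.mul_const T).mul_const M)).add
          ((hconv.tendsto_at y').add_const _)
      have := le_of_tendsto_of_tendsto' hlhs hrhs hstep
      simpa using this
    refine le_of_forall_pos_le_add ?_
    intro ε hε
    have hδ : 0 < ε / (|C| + 1) := div_pos hε (by positivity)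
    have h1 := main _ hδ
    have h2 : |C| * (ε / (|C| + 1)) ≤ ε := by
      rw [mul_div_assoc', div_le_iff₀ (by positivity)]
      nlinarith [abs_nonneg C, hε.le]
    linarith
  exact ⟨key, fun y y' => le_antisymm (key y y') (key y' y)⟩
end

section
/- Let w : ℝ^{d×N} → ℝ be Lipschitz continuous and ℤ^{d×N}-periodic, and let Γ¹ = I, Γ²,...,Γᴺ be diagonal d×d matrices. Define v : ℝᵈ → ℝ by v(y) = w(Γ¹y, Γ²y, ..., Γᴺy). If w is a viscosity subsolution of H(y¹,...,yᴺ, p + Σₙ Γⁿ ∇_{yⁿ} w) ≤ c on ℝ^{d×N} for a continuous H and constant c, and φ ∈ C²(ℝᵈ) is such that v − φ has a strict local maximum at ȳ ∈ ℝᵈ, then H(Γ¹ȳ, Γ²ȳ, ..., Γᴺȳ, p + ∇φ(ȳ)) ≤ c. -/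
/-!
Penalization towards the diagonal. For `β → ∞` let `Y_β` maximize `w − ψ_β`, where
`ψ_β(Y) = φ(Y⁰) + β Σₙ ‖Yⁿ − Γⁿ Y⁰‖²`, over a compact neighbourhood of `(Γⁿ ȳ)ₙ`.
Comparing with the diagonal point `(Γⁿ ȳ)ₙ` and using that `w` is `K`-Lipschitz gives
`‖Yⁿ_β − Γⁿ Y⁰_β‖ ≤ K / β` and `(v − φ)(Y⁰_β) ≥ (v − φ)(ȳ) − K² / β`. Since the maximum of
`v − φ` at `ȳ` is strict, `Y_β → (Γⁿ ȳ)ₙ`, so eventually `Y_β` is an interior, hence local,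
maximum and the subsolution inequality applies there. The penalty is constant along the
diagonal directions `(Γⁿ e)ₙ`, so `Σₙ Γⁿ ∇_{yⁿ} ψ_β(Y_β) = ∇φ(Y⁰_β)`; letting `β → ∞` and
using the continuity of `H` and `∇φ` gives the claim.
-/

open Filter Topology Metric
open scoped NNReal

lemma IsCompact.tendsto_nhds_of_tendsto_apply_of_forall_lt {X α : Type*} [TopologicalSpace X]
    {s : Set X} (hs : IsCompact s) {f : X → ℝ} (hf : Continuous f) {x₀ : X}
    (hmax : ∀ y ∈ s, y ≠ x₀ → f y < f x₀) {l : Filter α} {x : α → X}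
    (hx : ∀ᶠ a in l, x a ∈ s) (hfx : Tendsto (f ∘ x) l (𝓝 (f x₀))) :
    Tendsto x l (𝓝 x₀) := by
  refine hs.tendsto_nhds_of_unique_mapClusterPt hx fun z hz hcl => ?_
  by_contra hne
  obtain ⟨m, hzm, hmx⟩ := exists_between (hmax z hz hne)
  have hnear : ∃ᶠ a in l, f (x a) < m :=
    hcl.frequently (hf.continuousAt.eventually_lt continuousAt_const hzm)
  obtain ⟨a, hlt, hgt⟩ := (hnear.and_eventually (hfx.eventually (lt_mem_nhds hmx))).exists
  exact hlt.not_gt hgt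

lemma pi_norm_sq_le_sum_norm_sq {ι : Type*} [Fintype ι] {E : ι → Type*}
    [∀ i, SeminormedAddCommGroup (E i)] (Z : ∀ i, E i) : ‖Z‖ ^ 2 ≤ ∑ i, ‖Z i‖ ^ 2 := by
  have hS : 0 ≤ ∑ i, ‖Z i‖ ^ 2 := Finset.sum_nonneg fun i _ => sq_nonneg _
  refine (Real.le_sqrt (norm_nonneg _) hS).1 ((pi_norm_le_iff_of_nonneg (Real.sqrt_nonneg _)).2
    fun i => Real.le_sqrt_of_sq_le ?_)
  exact Finset.single_le_sum (f := fun i => ‖Z i‖ ^ 2) (fun i _ => sq_nonneg _) (Finset.mem_univ i)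

section Penalization

variable {E F : Type*} [NormedAddCommGroup F]

/-- With `π = eval 0`, `G = diagEmbedding γ` and `q = Σₙ ‖·ₙ‖²` this is the paper's test function
`φ(y¹) + β Σₙ |yⁿ − Γⁿ y¹|²`. -/
def penalizedTest (φ : E → ℝ) (π : F → E) (G : E → F) (q : F → ℝ) (β : ℝ) (Y : F) : ℝ :=
  φ (π Y) + β * q (Y - G (π Y))

def penaltyBox [NormedAddCommGroup E] (π : F → E) (G : E → F) (y₀ : E) (r : ℝ) : Set F :=
  (fun Y => (π Y, Y - G (π Y))) ⁻¹' (closedBall y₀ r ×ˢ closedBall 0 r)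

variable {π : F → E} {G : E → F}

lemma isCompact_penaltyBox [NormedAddCommGroup E] [ProperSpace E] [ProperSpace F]
    (hπ : Continuous π) (hG : Continuous G) (y₀ : E) (r : ℝ) : IsCompact (penaltyBox π G y₀ r) := by
  refine (((isCompact_closedBall y₀ r).prod (isCompact_closedBall 0 r)).image
    (f := fun p => G p.1 + p.2) (by fun_prop)).of_isClosed_subset
    ((isClosed_closedBall.prod isClosed_closedBall).preimage (by fun_prop)) fun Y hY => ?_
  exact ⟨(π Y, Y - G (π Y)), hY, add_sub_cancel _ _⟩

lemma penaltyBox_mem_nhds [NormedAddCommGroup E] (hπ : Continuous π) (hG : Continuous G)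
    (hπG : ∀ x, π (G x) = x) (y₀ : E) {r : ℝ} (hr : 0 < r) : penaltyBox π G y₀ r ∈ 𝓝 (G y₀) := by
  refine ((hπ.prodMk (continuous_id.sub (hG.comp hπ))).tendsto (G y₀)) ?_
  simpa [hπG] using prod_mem_nhds (closedBall_mem_nhds y₀ hr) (closedBall_mem_nhds 0 hr)

lemma penalizedTest_maximizer_bounds {w : F → ℝ} {K : ℝ≥0} (hw : LipschitzWith K w)
    (hπG : ∀ x, π (G x) = x) {φ : E → ℝ} {q : F → ℝ} (hq0 : q 0 = 0)
    (hq : ∀ Z, ‖Z‖ ^ 2 ≤ q Z) {β : ℝ} (hβ : 0 < β) {y₀ : E} {Y : F}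
    (hY : w (G y₀) - penalizedTest φ π G q β (G y₀) ≤ w Y - penalizedTest φ π G q β Y)
    (hloc : w (G (π Y)) - φ (π Y) ≤ w (G y₀) - φ y₀) :
    ‖Y - G (π Y)‖ ≤ K / β ∧ w (G y₀) - φ y₀ - K ^ 2 / β ≤ w (G (π Y)) - φ (π Y) := by
  set δ := ‖Y - G (π Y)‖
  simp only [penalizedTest, hπG, sub_self, hq0, mul_zero, add_zero] at hY
  have hlip : w Y ≤ w (G (π Y)) + K * δ := by
    simpa [dist_eq_norm] using hw.le_add_mul Y (G (π Y))
  have hpen : β * δ ^ 2 ≤ β * q (Y - G (π Y)) := mul_le_mul_of_nonneg_left (hq _) hβ.le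
  have hδ : δ ≤ K / β := by
    rw [le_div_iff₀ hβ]
    have hδ0 : 0 ≤ δ := norm_nonneg _
    nlinarith [K.coe_nonneg]
  have hKδ : K * δ ≤ K ^ 2 / β := by
    calc (K : ℝ) * δ ≤ K * (K / β) := mul_le_mul_of_nonneg_left hδ K.coe_nonneg
      _ = K ^ 2 / β := by ring
  exact ⟨hδ, by nlinarith [sq_nonneg δ]⟩

theorem exists_tendsto_isLocalMax_sub_penalizedTest [NormedAddCommGroup E] [ProperSpace E]
    [ProperSpace F] {w : F → ℝ} {K : ℝ≥0} (hw : LipschitzWith K w) (hπ : Continuous π)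
    (hG : Continuous G) (hπG : ∀ x, π (G x) = x) {φ : E → ℝ} (hφ : Continuous φ) {q : F → ℝ}
    (hq : Continuous q) (hq0 : q 0 = 0) (hq_le : ∀ Z, ‖Z‖ ^ 2 ≤ q Z) {y₀ : E}
    (hmax : ∀ᶠ y in 𝓝 y₀, y ≠ y₀ → w (G y) - φ y < w (G y₀) - φ y₀) :
    ∃ Y : ℝ → F, Tendsto Y atTop (𝓝 (G y₀)) ∧
      ∀ᶠ β in atTop, IsLocalMax (fun Z => w Z - penalizedTest φ π G q β Z) (Y β) := by
  set f := fun y => w (G y) - φ y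
  obtain ⟨r, hr, hball⟩ := nhds_basis_closedBall.mem_iff.1 hmax
  have hle : ∀ y ∈ closedBall y₀ r, f y ≤ f y₀ := fun y hy =>
    (eq_or_ne y y₀).elim (fun h => h ▸ le_rfl) fun h => (hball hy h).le
  have hbox := penaltyBox_mem_nhds hπ hG hπG y₀ hr
  have hcont : ∀ β, Continuous fun Z => w Z - penalizedTest φ π G q β Z := fun β => by
    have := hw.continuous
    unfold penalizedTest
    fun_prop
  choose Y hYbox hYmax using fun β => (isCompact_penaltyBox hπ hG y₀ r).exists_isMaxOn
    ⟨_, mem_of_mem_nhds hbox⟩ (hcont β).continuousOn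
  have hest : ∀ᶠ β in atTop,
      ‖Y β - G (π (Y β))‖ ≤ K / β ∧ f y₀ - K ^ 2 / β ≤ f (π (Y β)) := by
    filter_upwards [eventually_gt_atTop 0] with β hβ
    exact penalizedTest_maximizer_bounds hw hπG hq0 hq_le hβ (hYmax β (mem_of_mem_nhds hbox))
      (hle _ (hYbox β).1)
  have hgap : Tendsto (fun β => Y β - G (π (Y β))) atTop (𝓝 0) :=
    squeeze_zero_norm' (hest.mono fun _ h => h.1) (tendsto_const_nhds.div_atTop tendsto_id)
  have hval : Tendsto (f ∘ fun β => π (Y β)) atTop (𝓝 (f y₀)) := by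
    refine tendsto_of_tendsto_of_tendsto_of_le_of_le' ?_ tendsto_const_nhds
      (hest.mono fun _ h => h.2) (Eventually.of_forall fun β => hle _ (hYbox β).1)
    simpa using (tendsto_const_nhds (x := f y₀)).sub (tendsto_const_nhds.div_atTop tendsto_id)
  have hπY : Tendsto (fun β => π (Y β)) atTop (𝓝 y₀) :=
    (isCompact_closedBall y₀ r).tendsto_nhds_of_tendsto_apply_of_forall_lt
      (by have := hw.continuous; fun_prop : Continuous f)
      (fun _ hy => hball hy) (Eventually.of_forall fun β => (hYbox β).1) hval
  have hY : Tendsto Y atTop (𝓝 (G y₀)) := by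
    simpa using ((hG.tendsto y₀).comp hπY).add hgap
  refine ⟨Y, hY, ?_⟩
  filter_upwards [hY.eventually (eventually_mem_nhds_iff.2 hbox)] with β hβ
  exact (hYmax β).isLocalMax hβ

end Penalization

section Derivative

variable {E F : Type*} [NormedAddCommGroup E] [NormedSpace ℝ E] [NormedAddCommGroup F]
  [NormedSpace ℝ F] (π : F →L[ℝ] E) (G : E →L[ℝ] F) {φ : E → ℝ} {q : F → ℝ}

lemma contDiff_penalizedTest {n : WithTop ℕ∞} (hφ : ContDiff ℝ n φ) (hq : ContDiff ℝ n q)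
    (β : ℝ) : ContDiff ℝ n (penalizedTest φ π G q β) :=
  (hφ.comp π.contDiff).add
    (contDiff_const.mul (hq.comp (contDiff_id.sub (G.contDiff.comp π.contDiff))))

lemma fderiv_penalizedTest_apply_map (hπG : ∀ x, π (G x) = x) {Y : F}
    (hφ : DifferentiableAt ℝ φ (π Y)) (hq : DifferentiableAt ℝ q (Y - G (π Y))) (β : ℝ)
    (v : E) : fderiv ℝ (penalizedTest φ π G q β) Y (G v) = fderiv ℝ φ (π Y) v := by
  have hgap : HasFDerivAt (fun Z => Z - G (π Z)) (ContinuousLinearMap.id ℝ F - G ∘L π) Y :=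
    (hasFDerivAt_id Y).sub (G.hasFDerivAt.comp Y π.hasFDerivAt)
  have h : HasFDerivAt (penalizedTest φ π G q β) _ Y :=
    (hφ.hasFDerivAt.comp Y π.hasFDerivAt).add ((hq.hasFDerivAt.comp Y hgap).const_mul β)
  rw [h.fderiv]
  simp [hπG]

end Derivative

section Diagonal

variable {d N : ℕ}

noncomputable def diagEmbedding (γ : Fin N → Fin d → ℝ) :
    EuclideanSpace ℝ (Fin d) →L[ℝ] (Fin N → EuclideanSpace ℝ (Fin d)) :=
  LinearMap.toContinuousLinearMap
    { toFun := fun y n => (WithLp.equiv 2 (Fin d → ℝ)).symm fun i => γ n i * y i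
      map_add' := fun x y => by ext n i; simp [mul_add]
      map_smul' := fun a x => by ext n i; simp [mul_left_comm] }

lemma diagEmbedding_apply (γ : Fin N → Fin d → ℝ) (y : EuclideanSpace ℝ (Fin d)) (n : Fin N) :
    diagEmbedding γ y n = (WithLp.equiv 2 (Fin d → ℝ)).symm fun i => γ n i * y i :=
  rfl

lemma diagEmbedding_apply_zero [NeZero N] {γ : Fin N → Fin d → ℝ} (hγ : ∀ i, γ 0 i = 1)
    (y : EuclideanSpace ℝ (Fin d)) : diagEmbedding γ y 0 = y := by
  ext i; simp [diagEmbedding_apply, hγ]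

lemma sum_mul_apply_single_eq_apply_diagEmbedding (γ : Fin N → Fin d → ℝ)
    (L : (Fin N → EuclideanSpace ℝ (Fin d)) →L[ℝ] ℝ) (i : Fin d) :
    ∑ n, γ n i * L (Pi.single n (EuclideanSpace.single i 1)) =
      L (diagEmbedding γ (EuclideanSpace.single i 1)) := by
  have : diagEmbedding γ (EuclideanSpace.single i 1) =
      ∑ n, γ n i • Pi.single n (EuclideanSpace.single i (1 : ℝ)) := by
    ext n j
    by_cases h : j = i <;> simp [diagEmbedding_apply, Finset.sum_apply, Pi.single_apply, h]
  simp [this]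

end Diagonal

lemma EuclideanSpace.equiv_symm_fderiv_single_eq_gradient {ι : Type*} [Fintype ι]
    [DecidableEq ι] (φ : EuclideanSpace ℝ ι → ℝ) (y : EuclideanSpace ℝ ι) :
    (WithLp.equiv 2 (ι → ℝ)).symm (fun i => fderiv ℝ φ y (EuclideanSpace.single i 1)) =
      gradient φ y := by
  ext i
  simp [← inner_gradient_left, EuclideanSpace.inner_single_right]

theorem stmt_16_general (d N : ℕ) [NeZero N]
    (γ : Fin N → Fin d → ℝ) (hγ1 : ∀ i, γ 0 i = 1)
    (H : (Fin N → EuclideanSpace ℝ (Fin d)) → EuclideanSpace ℝ (Fin d) → ℝ)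
    (hHcont : Continuous fun Yq : (Fin N → EuclideanSpace ℝ (Fin d)) × EuclideanSpace ℝ (Fin d) =>
      H Yq.1 Yq.2)
    (c : ℝ) (p : EuclideanSpace ℝ (Fin d))
    (w : (Fin N → EuclideanSpace ℝ (Fin d)) → ℝ) (K : NNReal)
    (hwLip : LipschitzWith K w)
    (hsub : ∀ ψ : (Fin N → EuclideanSpace ℝ (Fin d)) → ℝ, ContDiff ℝ 2 ψ →
      ∀ Y : Fin N → EuclideanSpace ℝ (Fin d), IsLocalMax (fun Z => w Z - ψ Z) Y →
        H Y (p + (WithLp.equiv 2 (Fin d → ℝ)).symm fun i =>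
          ∑ n, γ n i * fderiv ℝ ψ Y (Pi.single n (EuclideanSpace.single i 1))) ≤ c)
    (φ : EuclideanSpace ℝ (Fin d) → ℝ) (hφ : ContDiff ℝ 2 φ)
    (ybar : EuclideanSpace ℝ (Fin d))
    (hmax : ∃ U ∈ nhds ybar, ∀ y ∈ U, y ≠ ybar →
      w (fun n => (WithLp.equiv 2 (Fin d → ℝ)).symm fun i => γ n i * y i) - φ y <
        w (fun n => (WithLp.equiv 2 (Fin d → ℝ)).symm fun i => γ n i * ybar i) - φ ybar) :
    H (fun n => (WithLp.equiv 2 (Fin d → ℝ)).symm fun i => γ n i * ybar i)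
      (p + gradient φ ybar) ≤ c := by
  obtain ⟨U, hU, hstrict⟩ := hmax
  set π := ContinuousLinearMap.proj (R := ℝ) (φ := fun _ : Fin N => EuclideanSpace ℝ (Fin d)) 0
  set q := fun Z : Fin N → EuclideanSpace ℝ (Fin d) => ∑ n, ‖Z n‖ ^ 2
  have hπG : ∀ y, π (diagEmbedding γ y) = y := diagEmbedding_apply_zero hγ1
  have hq : ContDiff ℝ 2 q :=
    ContDiff.sum fun n _ => (contDiff_norm_sq ℝ).comp (contDiff_apply ℝ _ n)
  obtain ⟨Y, hY, hYmax⟩ := exists_tendsto_isLocalMax_sub_penalizedTest hwLip π.continuous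
    (diagEmbedding γ).continuous hπG hφ.continuous hq.continuous (by simp [q])
    pi_norm_sq_le_sum_norm_sq (eventually_of_mem hU hstrict)
  have hHY : ∀ᶠ β in atTop, H (Y β) (p + gradient φ (π (Y β))) ≤ c := by
    filter_upwards [hYmax] with β hβ
    simpa [sum_mul_apply_single_eq_apply_diagEmbedding,
      fderiv_penalizedTest_apply_map π (diagEmbedding γ) hπG (hφ.differentiable two_ne_zero _)
        (hq.differentiable two_ne_zero _),
      EuclideanSpace.equiv_symm_fderiv_single_eq_gradient] using
      hsub _ (contDiff_penalizedTest π (diagEmbedding γ) hφ hq β) _ hβ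
  have hgrad : Continuous (gradient φ) :=
    (InnerProductSpace.toDual ℝ _).symm.continuous.comp (hφ.continuous_fderiv two_ne_zero)
  have hπY : Tendsto (fun β => π (Y β)) atTop (𝓝 ybar) := by
    have h := (π.continuous.tendsto (diagEmbedding γ ybar)).comp hY
    rwa [hπG] at h
  have hlim : Tendsto (fun β => H (Y β) (p + gradient φ (π (Y β)))) atTop
      (𝓝 (H (diagEmbedding γ ybar) (p + gradient φ ybar))) :=
    (hHcont.tendsto _).comp (hY.prodMk_nhds (tendsto_const_nhds.add ((hgrad.tendsto _).comp hπY)))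
  exact le_of_tendsto hlim hHY

/-- Theorem 3.1: if `w` is a Lipschitz, `ℤ^{d×N}`-periodic viscosity subsolution of
`H(Y, p + Σₙ Γⁿ ∇_{yⁿ} w) ≤ c` on `ℝ^{d×N}` (with `Γ¹ = I` and the `Γⁿ` diagonal),
then at any strict local maximum `ȳ` of `v − φ`, where
`v(y) = w(Γ¹y, ..., Γᴺy)` and `φ ∈ C²`, one has
`H(Γ¹ȳ,...,Γᴺȳ, p + ∇φ(ȳ)) ≤ c`. -/
theorem stmt_16 (d N : ℕ) [NeZero N]
    (γ : Fin N → Fin d → ℝ) (hγ1 : ∀ i, γ 0 i = 1)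
    (H : (Fin N → EuclideanSpace ℝ (Fin d)) → EuclideanSpace ℝ (Fin d) → ℝ)
    (hHcont : Continuous fun Yq : (Fin N → EuclideanSpace ℝ (Fin d)) × EuclideanSpace ℝ (Fin d) =>
      H Yq.1 Yq.2)
    (c : ℝ) (p : EuclideanSpace ℝ (Fin d))
    (w : (Fin N → EuclideanSpace ℝ (Fin d)) → ℝ) (K : NNReal)
    (hwLip : LipschitzWith K w)
    (hwper : ∀ (Y : Fin N → EuclideanSpace ℝ (Fin d)) (k : Fin N → Fin d → ℤ),
      w (fun n => Y n + (WithLp.equiv 2 (Fin d → ℝ)).symm fun i => (k n i : ℝ)) = w Y)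
    (hsub : ∀ ψ : (Fin N → EuclideanSpace ℝ (Fin d)) → ℝ, ContDiff ℝ 2 ψ →
      ∀ Y : Fin N → EuclideanSpace ℝ (Fin d), IsLocalMax (fun Z => w Z - ψ Z) Y →
        H Y (p + (WithLp.equiv 2 (Fin d → ℝ)).symm fun i =>
          ∑ n, γ n i * fderiv ℝ ψ Y (Pi.single n (EuclideanSpace.single i 1))) ≤ c)
    (φ : EuclideanSpace ℝ (Fin d) → ℝ) (hφ : ContDiff ℝ 2 φ)
    (ybar : EuclideanSpace ℝ (Fin d))
    (hmax : ∃ U ∈ nhds ybar, ∀ y ∈ U, y ≠ ybar →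
      w (fun n => (WithLp.equiv 2 (Fin d → ℝ)).symm fun i => γ n i * y i) - φ y <
        w (fun n => (WithLp.equiv 2 (Fin d → ℝ)).symm fun i => γ n i * ybar i) - φ ybar) :
    H (fun n => (WithLp.equiv 2 (Fin d → ℝ)).symm fun i => γ n i * ybar i)
      (p + gradient φ ybar) ≤ c :=
  stmt_16_general d N γ hγ1 H hHcont c p w K hwLip hsub φ hφ ybar hmax
end
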